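/- arXiv:1710.07362 — 7 statements merged into one kernel-verified Lean document; each statement's English description precedes it below -/
import Mathlib

section
/- Let k ≥ 1 and let m be an integer not divisible by k+2, and set q := exp(mπi/(k+2)) ∈ ℂ. Then the global dimension of the category C_{k,m}, namely the sum of the squares of the categorical dimensions of its k+1 simple objects, satisfies Σ_{n=0}^{k} ([n+1]_q)² = 2(k+2)/(2 − q² − q^{−2}). (The categorical dimension of X_n in C_{k,m,+} is (−1)^n[n+1]_q, so the global dimension is Σ_{n=0}^{k} [n+1]_q².) -/
/-- The quantum integer `[n]_q = (q^n - q^(-n))/(q - q⁻¹)`. -/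
noncomputable def qint (q : ℂ) (n : ℤ) : ℂ := (q ^ n - q ^ (-n)) / (q - q⁻¹)

/-!
With `z = q²`, the square `[n]_q²` equals `(zⁿ + z⁻ⁿ - 2) / (z + z⁻¹ - 2)`. When `z` is a
`(k+2)`-th root of unity other than `1`, the powers `z, …, z^(k+1)` sum to `-1`, and so do
their inverses; hence the numerators sum to `-1 - 1 - 2(k+1) = -2(k+2)`.
-/

open Finset

lemma sub_inv_sq {K : Type*} [Field K] {a : K} (ha : a ≠ 0) :
    (a - a⁻¹) ^ 2 = a ^ 2 + (a ^ 2)⁻¹ - 2 := by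
  field_simp
  ring

lemma qint_natCast_sq {q : ℂ} (hq : q ≠ 0) (n : ℕ) :
    qint q n ^ 2 = ((q ^ 2) ^ n + (q ^ 2)⁻¹ ^ n - 2) / (q ^ 2 + (q ^ 2)⁻¹ - 2) := by
  rw [qint, zpow_neg, zpow_natCast, div_pow, sub_inv_sq hq, sub_inv_sq (pow_ne_zero n hq),
    inv_pow, ← pow_mul, ← pow_mul, mul_comm n 2]

lemma sum_range_pow_succ_of_pow_eq_one {K : Type*} [Field K] {z : K} {k : ℕ} (hz : z ≠ 1)
    (hroot : z ^ (k + 2) = 1) : ∑ n ∈ range (k + 1), z ^ (n + 1) = -1 := by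
  have hgeom : ∑ n ∈ range (k + 2), z ^ n = 0 := by
    rw [geom_sum_eq hz, hroot, sub_self, zero_div]
  rw [sum_range_succ'] at hgeom
  linear_combination hgeom

theorem sum_qint_succ_sq_of_pow_eq_one {q : ℂ} {k : ℕ} (hq : q ^ 2 ≠ 1)
    (hroot : (q ^ 2) ^ (k + 2) = 1) :
    ∑ n ∈ range (k + 1), qint q ((n : ℤ) + 1) ^ 2 = 2 * ((k : ℂ) + 2) / (2 - q ^ 2 - (q ^ 2)⁻¹) := by
  have hq0 : q ≠ 0 := by
    rintro rfl
    simp at hroot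
  have hinv : (q ^ 2)⁻¹ ≠ 1 := inv_ne_one.mpr hq
  have hinv_root : (q ^ 2)⁻¹ ^ (k + 2) = 1 := by rw [inv_pow, hroot, inv_one]
  have hnum : ∑ n ∈ range (k + 1), ((q ^ 2) ^ (n + 1) + (q ^ 2)⁻¹ ^ (n + 1) - 2) =
      -2 * ((k : ℂ) + 2) := by
    rw [sum_sub_distrib, sum_add_distrib, sum_range_pow_succ_of_pow_eq_one hq hroot,
      sum_range_pow_succ_of_pow_eq_one hinv hinv_root, sum_const, card_range, nsmul_eq_mul]
    push_cast
    ring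
  simp_rw [← Nat.cast_succ, qint_natCast_sq hq0, ← sum_div, hnum]
  rw [← neg_div_neg_eq]
  congr 1 <;> ring

lemma Complex.exp_two_pi_mul_I_mul_int_div_eq_one_iff {m : ℤ} {N : ℕ} (hN : N ≠ 0) :
    Complex.exp (2 * Real.pi * Complex.I * m / N) = 1 ↔ (N : ℤ) ∣ m := by
  rw [Complex.exp_eq_one_iff]
  conv in _ = _ => rw [← mul_comm (2 * Real.pi * Complex.I), mul_div_assoc,
    mul_right_inj' Complex.two_pi_I_ne_zero]
  field_simp [Nat.cast_ne_zero.mpr hN]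
  norm_cast

theorem stmt2_general (k : ℕ) (m : ℤ) (hm : ¬ ((k : ℤ) + 2) ∣ m)
    (q : ℂ) (hq : q = Complex.exp ((m : ℂ) * (Real.pi : ℂ) * Complex.I / ((k : ℂ) + 2))) :
    ∑ n ∈ Finset.range (k + 1), (qint q ((n : ℤ) + 1)) ^ 2 =
      2 * ((k : ℂ) + 2) / (2 - q ^ (2 : ℤ) - q ^ (-2 : ℤ)) := by
  have hq2 : q ^ 2 = Complex.exp (2 * Real.pi * Complex.I * m / ((k + 2 : ℕ) : ℂ)) := by
    rw [hq, ← Complex.exp_nat_mul]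
    push_cast
    ring_nf
  have hroot : (q ^ 2) ^ (k + 2) = 1 := by
    rw [hq2, ← Complex.exp_nat_mul, ← Complex.exp_int_mul_two_pi_mul_I m]
    congr 1
    rw [mul_div_cancel₀ _ (Nat.cast_ne_zero.mpr (k + 1).succ_ne_zero)]
    ring
  have hq2_ne : q ^ 2 ≠ 1 := by
    rw [hq2, Ne, Complex.exp_two_pi_mul_I_mul_int_div_eq_one_iff (by omega)]
    exact_mod_cast hm
  rw [zpow_neg, zpow_ofNat]
  exact sum_qint_succ_sq_of_pow_eq_one hq2_ne hroot

/-- For `k ≥ 1`, `m` not divisible by `k+2`, and `q = exp(mπi/(k+2))`, the global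
dimension of `C_{k,m}`, i.e. the sum of the squares of the categorical dimensions
`(-1)^n [n+1]_q` of its `k+1` simple objects, equals `2(k+2)/(2 - q² - q^(-2))`. -/
theorem stmt2 (k : ℕ) (hk : 1 ≤ k) (m : ℤ) (hm : ¬ ((k : ℤ) + 2) ∣ m)
    (q : ℂ) (hq : q = Complex.exp ((m : ℂ) * (Real.pi : ℂ) * Complex.I / ((k : ℂ) + 2))) :
    ∑ n ∈ Finset.range (k + 1), (qint q ((n : ℤ) + 1)) ^ 2 =
      2 * ((k : ℂ) + 2) / (2 - q ^ (2 : ℤ) - q ^ (-2 : ℤ)) :=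
  stmt2_general k m hm q hq
end

section
/- Let k ≥ 1 and let m₁, m₂ be integers with 1 ≤ m₁, m₂ ≤ k+1 and gcd(m₁, k+2) = gcd(m₂, k+2) = 1. Then the real algebraic numbers δ₁ := 2cos(m₁π/(k+2)) and δ₂ := 2cos(m₂π/(k+2)) have the same minimal polynomial over ℚ if and only if k is even, or k is odd and m₁ ≡ m₂ (mod 2). (Hence the monoidal categories C_{k,m}, whose complete invariant is δ = 2cos(mπ/(k+2)), form a single Galois orbit when k is even and exactly two Galois orbits, distinguished by the parity of m, when k is odd.) -/
/-!
The number `2 cos (mπ/n)` is `u + u⁻¹` for `u = exp (mπi/n)`, a primitive root of unity of order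
`2n / gcd(2n, m)`; for `m` coprime to `n` this order is `2n` or `n` according as `m` is odd or even.
For primitive roots of unity `u` and `v`, the numbers `u + u⁻¹` and `v + v⁻¹` are conjugate over `ℚ`
exactly when `u` and `v` have the same order: roots of equal order are conjugate because
cyclotomic polynomials are irreducible over `ℚ`, and conversely an embedding of `ℚ(u)` carrying
`u + u⁻¹` to `v + v⁻¹` carries `u` to `v` or `v⁻¹`. Hence the two invariants are conjugate iff
`m₁ ≡ m₂ (mod 2)`, which is automatic when `k + 2` is even.
-/

open Polynomial IntermediateField

theorem minpoly_add_inv_eq_of_minpoly_eq {K L : Type*} [Field K] [Field L] [Algebra K L]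
    {x y : L} (hx : IsIntegral K x) (h : minpoly K x = minpoly K y) :
    minpoly K (x + x⁻¹) = minpoly K (y + y⁻¹) := by
  have : Fact (Irreducible (minpoly K x)) := ⟨minpoly.irreducible hx⟩
  set r := AdjoinRoot.root (minpoly K x)
  have key (z : L) (hz : aeval z (minpoly K x) = 0) :
      minpoly K (z + z⁻¹) = minpoly K (r + r⁻¹) := by
    let φ := AdjoinRoot.liftAlgHom _ (Algebra.ofId K L) z hz
    have hr : φ r = z := AdjoinRoot.liftAlgHom_root ..
    rw [← minpoly.algHom_eq φ φ.toRingHom.injective, map_add, map_inv₀, hr]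
  rw [key x (minpoly.aeval K x), key y (h ▸ minpoly.aeval K y)]

theorem IsPrimitiveRoot.minpoly_add_inv_eq {L : Type*} [Field L] [CharZero L] {n : ℕ}
    (hn : 0 < n) {u v : L} (hu : IsPrimitiveRoot u n) (hv : IsPrimitiveRoot v n) :
    minpoly ℚ (u + u⁻¹) = minpoly ℚ (v + v⁻¹) :=
  minpoly_add_inv_eq_of_minpoly_eq (hu.isIntegral hn).tower_top <| by
    rw [← cyclotomic_eq_minpoly_rat hu hn, ← cyclotomic_eq_minpoly_rat hv hn]

theorem eq_or_eq_inv_of_add_inv_eq {K : Type*} [Field K] {v w : K} (hv : v ≠ 0) (hw : w ≠ 0)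
    (h : v + v⁻¹ = w + w⁻¹) : v = w ∨ v = w⁻¹ := by
  have : (v - w) * (v - w⁻¹) = 0 := by
    linear_combination v * h + mul_inv_cancel₀ hw - mul_inv_cancel₀ hv
  simpa [sub_eq_zero] using this

theorem IsPrimitiveRoot.exists_add_inv_eq_of_minpoly_eq {L : Type*} [Field L] [CharZero L]
    [IsAlgClosed L] {n : ℕ} (hn : 0 < n) {u y : L} (hu : IsPrimitiveRoot u n)
    (h : minpoly ℚ (u + u⁻¹) = minpoly ℚ y) : ∃ w, IsPrimitiveRoot w n ∧ w + w⁻¹ = y := by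
  have : FiniteDimensional ℚ ℚ⟮u⟯ := adjoin.finiteDimensional (hu.isIntegral hn).tower_top
  set g := AdjoinSimple.gen ℚ u
  have hg : IsPrimitiveRoot g n :=
    IsPrimitiveRoot.of_map_of_injective (f := algebraMap ℚ⟮u⟯ L)
      (by rwa [AdjoinSimple.algebraMap_gen]) (algebraMap ℚ⟮u⟯ L).injective
  have hmin : minpoly ℚ (g + g⁻¹) = minpoly ℚ y := by
    rw [← h, ← minpoly.algebraMap_eq (algebraMap ℚ⟮u⟯ L).injective, map_add, map_inv₀,
      AdjoinSimple.algebraMap_gen]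
  have hy : y ∈ (minpoly ℚ (g + g⁻¹)).rootSet L := by
    rw [mem_rootSet]
    exact ⟨minpoly.ne_zero (.of_finite ℚ _), by rw [hmin]; exact minpoly.aeval ℚ y⟩
  rw [← Algebra.IsAlgebraic.range_eval_eq_rootSet_minpoly] at hy
  obtain ⟨ψ, hψ⟩ := hy
  exact ⟨ψ g, hg.map_of_injective ψ.toRingHom.injective, by simpa using hψ⟩

theorem IsPrimitiveRoot.minpoly_add_inv_eq_iff {L : Type*} [Field L] [CharZero L]
    [IsAlgClosed L] {a b : ℕ} (ha : 0 < a) (hb : 0 < b) {u v : L} (hu : IsPrimitiveRoot u a)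
    (hv : IsPrimitiveRoot v b) : minpoly ℚ (u + u⁻¹) = minpoly ℚ (v + v⁻¹) ↔ a = b := by
  refine ⟨fun h => ?_, fun hab => hu.minpoly_add_inv_eq ha (hab ▸ hv)⟩
  obtain ⟨w, hw, hwv⟩ := hu.exists_add_inv_eq_of_minpoly_eq ha h
  rcases eq_or_eq_inv_of_add_inv_eq (hv.ne_zero hb.ne') (hw.ne_zero ha.ne') hwv.symm with
    rfl | rfl
  · exact hw.unique hv
  · exact hw.inv.unique hv

theorem IsPrimitiveRoot.pow_div_gcd {M : Type*} [CommMonoid M] {ζ : M} {k : ℕ}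
    (h : IsPrimitiveRoot ζ k) (hk : k ≠ 0) (i : ℕ) : IsPrimitiveRoot (ζ ^ i) (k / k.gcd i) := by
  have := IsPrimitiveRoot.orderOf (ζ ^ i)
  rwa [(h.isOfFinOrder hk).orderOf_pow, ← h.eq_orderOf] at this

theorem minpoly_two_cos (x : ℝ) :
    minpoly ℚ (2 * Real.cos x) =
      minpoly ℚ (Complex.exp (x * Complex.I) + (Complex.exp (x * Complex.I))⁻¹) := by
  rw [← minpoly.algebraMap_eq (algebraMap ℝ ℂ).injective, Complex.coe_algebraMap,
    Complex.ofReal_mul, Complex.ofReal_ofNat, Complex.ofReal_cos, Complex.two_cos,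
    ← Complex.exp_neg, neg_mul]

theorem Nat.gcd_two_eq_gcd_two_iff (a b : ℕ) : Nat.gcd 2 a = Nat.gcd 2 b ↔ a ≡ b [MOD 2] := by
  rw [Nat.gcd_rec, Nat.gcd_rec 2 b, Nat.ModEq]
  rcases Nat.mod_two_eq_zero_or_one a with ha | ha <;>
    rcases Nat.mod_two_eq_zero_or_one b with hb | hb <;> simp [ha, hb]

theorem Nat.modEq_two_of_coprime_of_even {n a b : ℕ} (hn : Even n) (ha : a.Coprime n)
    (hb : b.Coprime n) : a ≡ b [MOD 2] := by
  have hodd {m : ℕ} (hm : m.Coprime n) : m % 2 = 1 :=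
    Nat.odd_iff.mp (Nat.coprime_two_right.mp (hm.coprime_dvd_right hn.two_dvd))
  exact (hodd ha).trans (hodd hb).symm

theorem stmt4_general (k : ℕ) (m₁ m₂ : ℕ)
    (hc₁ : Nat.gcd m₁ (k + 2) = 1) (hc₂ : Nat.gcd m₂ (k + 2) = 1) :
    minpoly ℚ (2 * Real.cos ((m₁ : ℝ) * Real.pi / ((k : ℝ) + 2))) =
        minpoly ℚ (2 * Real.cos ((m₂ : ℝ) * Real.pi / ((k : ℝ) + 2))) ↔
      Even k ∨ (Odd k ∧ m₁ ≡ m₂ [MOD 2]) := by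
  have hN : 2 * (k + 2) ≠ 0 := by omega
  have hζ := Complex.isPrimitiveRoot_exp _ hN
  have hexp (m : ℕ) : Complex.exp (((m * Real.pi / (k + 2) : ℝ) : ℂ) * Complex.I) =
      Complex.exp (2 * Real.pi * Complex.I / (2 * (k + 2) : ℕ)) ^ m := by
    rw [← Complex.exp_nat_mul]
    congr 1
    push_cast
    field_simp
  have hord_pos (m : ℕ) : 0 < 2 * (k + 2) / (2 * (k + 2)).gcd m :=
    Nat.div_pos (Nat.gcd_le_left _ (by omega)) (Nat.gcd_pos_of_pos_left _ (by omega))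
  have hgcd {m : ℕ} (hm : m.gcd (k + 2) = 1) : (2 * (k + 2)).gcd m = Nat.gcd 2 m :=
    Nat.Coprime.gcd_mul_right_cancel 2 (Nat.coprime_comm.mp hm)
  rw [minpoly_two_cos, minpoly_two_cos, hexp, hexp,
    (hζ.pow_div_gcd hN m₁).minpoly_add_inv_eq_iff (hord_pos m₁) (hord_pos m₂)
      (hζ.pow_div_gcd hN m₂),
    Nat.div_eq_iff_eq_of_dvd_dvd hN (Nat.gcd_dvd_left _ _) (Nat.gcd_dvd_left _ _),
    hgcd hc₁, hgcd hc₂, Nat.gcd_two_eq_gcd_two_iff]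
  refine ⟨fun h => (Nat.even_or_odd k).imp_right (⟨·, h⟩), ?_⟩
  rintro (hk | ⟨-, h⟩)
  · exact Nat.modEq_two_of_coprime_of_even (hk.add even_two) hc₁ hc₂
  · exact h

/-- For `k ≥ 1` and `1 ≤ m₁, m₂ ≤ k+1` both coprime to `k+2`, the complete invariants
`δᵢ = 2cos(mᵢπ/(k+2))` have the same minimal polynomial over `ℚ` (i.e. `C_{k,m₁}` and
`C_{k,m₂}` are Galois conjugate) iff `k` is even, or `k` is odd and `m₁ ≡ m₂ (mod 2)`. -/
theorem stmt4 (k : ℕ) (hk : 1 ≤ k) (m₁ m₂ : ℕ)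
    (hm₁ : 1 ≤ m₁) (hm₁' : m₁ ≤ k + 1) (hm₂ : 1 ≤ m₂) (hm₂' : m₂ ≤ k + 1)
    (hc₁ : Nat.gcd m₁ (k + 2) = 1) (hc₂ : Nat.gcd m₂ (k + 2) = 1) :
    minpoly ℚ (2 * Real.cos ((m₁ : ℝ) * Real.pi / ((k : ℝ) + 2))) =
        minpoly ℚ (2 * Real.cos ((m₂ : ℝ) * Real.pi / ((k : ℝ) + 2))) ↔
      Even k ∨ (Odd k ∧ m₁ ≡ m₂ [MOD 2]) :=
  stmt4_general k m₁ m₂ hc₁ hc₂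
end

section
/- Let k ≥ 1, let R be an associative unital ring, and let x₀, x₁, ..., x_k ∈ R satisfy x₀ = 1, x_i·x₁ = x_{i−1} + x_{i+1} for all 1 ≤ i ≤ k−1, and x_k·x₁ = x_{k−1}. Then for all 0 ≤ i, j ≤ k: if i + j ≤ k then x_i·x_j = x_{|i−j|} + x_{|i−j|+2} + ⋯ + x_{i+j}, and if i + j > k then x_i·x_j = x_{|i−j|} + x_{|i−j|+2} + ⋯ + x_{2k−(i+j)} (in both cases the sum is over indices of the form |i−j| + 2t increasing in steps of 2 up to the stated upper bound). -/
namespace Stmt6Aux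

variable {R : Type*} [Ring R]

/-- The extension of `x` to a `(2k+4)`-periodic sequence, antisymmetric about
the "mirror points" `k+1` and `2k+3 ≡ -1`.  On one period it is
`x 0, …, x k, 0, -x k, …, -x 1, -x 0, 0`. -/
def zf (k : ℕ) (x : ℕ → R) (m : ℕ) : R :=
  if m ≤ k then x m
  else if m = k + 1 then 0
  else if m ≤ 2 * k + 2 then -x (2 * k + 2 - m)
  else 0

def yf (k : ℕ) (x : ℕ → R) (n : ℕ) : R := zf k x (n % (2 * k + 4))

variable {k : ℕ} {x : ℕ → R}

lemma zf_x {m : ℕ} (h : m ≤ k) : zf k x m = x m := by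
  unfold zf; rw [if_pos h]

lemma zf_mid : zf k x (k + 1) = (0 : R) := by
  unfold zf; rw [if_neg (by omega), if_pos rfl]

lemma zf_neg {m : ℕ} (h1 : k + 2 ≤ m) (h2 : m ≤ 2 * k + 2) :
    zf k x m = -x (2 * k + 2 - m) := by
  unfold zf; rw [if_neg (by omega), if_neg (by omega), if_pos h2]

lemma zf_last : zf k x (2 * k + 3) = (0 : R) := by
  unfold zf; rw [if_neg (by omega), if_neg (by omega), if_neg (by omega)]

lemma yf_small {n : ℕ} (h : n ≤ 2 * k + 3) : yf k x n = zf k x n := by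
  unfold yf; rw [Nat.mod_eq_of_lt (by omega)]

lemma yf_x {n : ℕ} (h : n ≤ k) : yf k x n = x n := by
  rw [yf_small (by omega), zf_x h]

lemma yf_period (n : ℕ) : yf k x (n + (2 * k + 4)) = yf k x n := by
  unfold yf; rw [Nat.add_mod_right]

lemma yf_period' (c n : ℕ) : yf k x (n + c * (2 * k + 4)) = yf k x n := by
  induction c with
  | zero => simp
  | succ c ih =>
      have h : n + (c + 1) * (2 * k + 4) = (n + c * (2 * k + 4)) + (2 * k + 4) := by ring
      rw [h, yf_period, ih]

lemma yf_zero : ∀ c n, n = k + 1 + c * (k + 2) → yf k x n = 0 := by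
  intro c
  induction c using Nat.strong_induction_on with
  | _ c ih =>
    intro n hn
    by_cases hc0 : c = 0
    · subst hc0
      have hn' : n = k + 1 := by omega
      rw [hn', yf_small (by omega), zf_mid]
    · by_cases hc1 : c = 1
      · subst hc1
        have hn' : n = 2 * k + 3 := by omega
        rw [hn', yf_small (by omega), zf_last]
      · obtain ⟨c', rfl⟩ : ∃ c', c = c' + 2 := ⟨c - 2, by omega⟩
        have h2 : n = (k + 1 + c' * (k + 2)) + (2 * k + 4) := by
          have he : (c' + 2) * (k + 2) = c' * (k + 2) + (2 * k + 4) := by ring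
          omega
        rw [h2, yf_period]
        exact ih c' (by omega) _ rfl

lemma yf_refl0 {a b : ℕ} (hab : a + b = 2 * k + 2) : yf k x a + yf k x b = 0 := by
  rw [yf_small (by omega), yf_small (by omega)]
  rcases le_or_gt a k with h | h
  · rw [zf_x h, zf_neg (m := b) (by omega) (by omega)]
    have hb : 2 * k + 2 - b = a := by omega
    rw [hb]; abel
  · rcases eq_or_lt_of_le (show k + 1 ≤ a by omega) with h1 | h1
    · have hb : b = k + 1 := by omega
      rw [← h1, hb, zf_mid]; abel
    · rw [zf_neg (m := a) (by omega) (by omega), zf_x (m := b) (by omega)]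
      have hb : 2 * k + 2 - a = b := by omega
      rw [hb]; abel

lemma yf_refl : ∀ c a b, a + b = 2 * k + 2 + c * (2 * k + 4) →
    yf k x a + yf k x b = 0 := by
  intro c
  induction c with
  | zero => intro a b h; exact yf_refl0 (by omega)
  | succ c ih =>
    intro a b h
    have he : (c + 1) * (2 * k + 4) = c * (2 * k + 4) + (2 * k + 4) := by ring
    rcases le_or_gt (2 * k + 4) a with ha | ha
    · obtain ⟨a', rfl⟩ : ∃ a', a = a' + (2 * k + 4) := ⟨a - (2 * k + 4), by omega⟩
      rw [yf_period]
      exact ih a' b (by omega)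
    · rcases le_or_gt (2 * k + 4) b with hb | hb
      · obtain ⟨b', rfl⟩ : ∃ b', b = b' + (2 * k + 4) := ⟨b - (2 * k + 4), by omega⟩
        rw [yf_period]
        exact ih a b' (by omega)
      · have hc : 0 ≤ c * (2 * k + 4) := Nat.zero_le _
        have ha' : a = 2 * k + 3 := by omega
        have hb' : b = 2 * k + 3 := by omega
        rw [ha', hb', yf_small (by omega), zf_last]; abel

/-- Sums of `yf` over an arithmetic progression symmetric about a mirror
point vanish. -/
lemma yf_zsum : ∀ s n c, n + s = k + 2 + c * (k + 2) →
    ∑ t ∈ Finset.range s, yf k x (n + 2 * t) = 0 := by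
  intro s
  induction s using Nat.strong_induction_on with
  | _ s ih =>
    intro n c h
    by_cases hs0 : s = 0
    · subst hs0; simp
    by_cases hs1 : s = 1
    · subst hs1
      rw [Finset.sum_range_one]
      exact yf_zero c (n + 2 * 0) (by omega)
    obtain ⟨m, rfl⟩ : ∃ m, s = m + 2 := ⟨s - 2, by omega⟩
    have p1 : ∑ t ∈ Finset.range (m + 2), yf k x (n + 2 * t)
        = (∑ t ∈ Finset.range (m + 1), yf k x (n + 2 * (t + 1))) + yf k x (n + 2 * 0) :=
      Finset.sum_range_succ' _ _
    have p2 : ∑ t ∈ Finset.range (m + 1), yf k x (n + 2 * (t + 1))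
        = (∑ t ∈ Finset.range m, yf k x (n + 2 * (t + 1))) + yf k x (n + 2 * (m + 1)) :=
      Finset.sum_range_succ _ _
    have e1 : ∑ t ∈ Finset.range m, yf k x (n + 2 * (t + 1))
        = ∑ t ∈ Finset.range m, yf k x ((n + 2) + 2 * t) :=
      Finset.sum_congr rfl fun t _ => by congr 1; omega
    rw [p1, p2, e1, ih m (by omega) (n + 2) c (by omega)]
    have h3 : yf k x (n + 2 * (m + 1)) + yf k x (n + 2 * 0) = 0 := by
      refine yf_refl c (n + 2 * (m + 1)) (n + 2 * 0) ?_
      have hc : c * (2 * k + 4) = 2 * (c * (k + 2)) := by ring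
      omega
    rw [zero_add, add_assoc] at *
    simpa using h3

section Rec

variable (h0 : x 0 = 1)
  (hmid : ∀ i, 1 ≤ i → i ≤ k - 1 → x i * x 1 = x (i - 1) + x (i + 1))
  (htop : x k * x 1 = x (k - 1))
  (hk : 1 ≤ k)

include h0 hmid htop hk

lemma yf_rec_small (n : ℕ) (hn : n ≤ 2 * k + 3) :
    yf k x (n + 1) * x 1 = yf k x n + yf k x (n + 2) := by
  by_cases hA : 1 ≤ n ∧ n + 2 ≤ k
  · -- interior: all three indices ≤ k
    rw [yf_x (by omega), yf_x (by omega), yf_x (by omega)]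
    have h := hmid (n + 1) (by omega) (by omega)
    have e1 : n + 1 - 1 = n := by omega
    rw [e1] at h
    exact h
  by_cases hB : n = 0
  · subst hB
    rw [yf_x (n := 0 + 1) (by omega), yf_x (n := 0) (by omega)]
    rcases le_or_gt 2 k with h2 | h2
    · rw [yf_x (by omega)]
      have h := hmid 1 (by omega) (by omega)
      simpa using h
    · -- k = 1
      have hk1 : k = 1 := by omega
      have e : (0 : ℕ) + 2 = k + 1 := by omega
      rw [e, yf_small (by omega), zf_mid]
      have h := htop
      rw [hk1] at h
      simpa [hk1] using h
  by_cases hC : n + 1 = k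
  · -- n = k-1 ≥ 1 here
    rw [yf_x (by omega), yf_x (by omega), yf_small (by omega)]
    have e2 : n + 2 = k + 1 := by omega
    rw [e2, zf_mid, hC]
    have h := htop
    have e3 : k - 1 = n := by omega
    rw [e3] at h
    rw [h, add_zero]
  by_cases hD : n = k
  · rw [yf_small (by omega), yf_x (by omega), yf_small (by omega)]
    have e1 : n + 1 = k + 1 := by omega
    rw [e1, zf_mid, zf_neg (m := n + 2) (by omega) (by omega)]
    have e2 : 2 * k + 2 - (n + 2) = k := by omega
    rw [e2, hD, zero_mul]; abel
  by_cases hE : n = k + 1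
  · rw [yf_small (by omega), yf_small (by omega), yf_small (by omega)]
    rw [show n = k + 1 from hE, zf_mid,
      zf_neg (m := k + 1 + 1) (by omega) (by omega),
      zf_neg (m := k + 1 + 2) (by omega) (by omega)]
    have e1 : 2 * k + 2 - (k + 1 + 1) = k := by omega
    have e2 : 2 * k + 2 - (k + 1 + 2) = k - 1 := by omega
    rw [e1, e2, neg_mul, htop]; abel
  by_cases hF : n + 2 ≤ 2 * k + 1
  · -- k+2 ≤ n ≤ 2k-1
    have hn1 : k + 2 ≤ n := by omega
    rw [yf_small (by omega), yf_small (by omega), yf_small (by omega)]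
    rw [zf_neg (m := n + 1) (by omega) (by omega),
      zf_neg (m := n) (by omega) (by omega),
      zf_neg (m := n + 2) (by omega) (by omega)]
    have h := hmid (2 * k + 2 - (n + 1)) (by omega) (by omega)
    have e1 : 2 * k + 2 - (n + 1) - 1 = 2 * k + 2 - (n + 2) := by omega
    have e2 : 2 * k + 2 - (n + 1) + 1 = 2 * k + 2 - n := by omega
    rw [e1, e2] at h
    rw [neg_mul, h]; abel
  by_cases hG : n = 2 * k
  · -- k ≥ 2 here (k = 1 would give n = 2 = k+1, caught above)
    have hk2 : 2 ≤ k := by omega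
    rw [yf_small (by omega), yf_small (by omega), yf_small (by omega)]
    rw [zf_neg (m := n + 1) (by omega) (by omega),
      zf_neg (m := n) (by omega) (by omega),
      zf_neg (m := n + 2) (by omega) (by omega)]
    have e1 : 2 * k + 2 - (n + 1) = 1 := by omega
    have e2 : 2 * k + 2 - n = 2 := by omega
    have e3 : 2 * k + 2 - (n + 2) = 0 := by omega
    rw [e1, e2, e3]
    have h := hmid 1 (by omega) (by omega)
    have h' : x 1 * x 1 = x 0 + x 2 := by simpa using h
    rw [neg_mul, h']; abel
  by_cases hH : n = 2 * k + 1
  · rw [yf_small (by omega), yf_small (by omega), yf_small (by omega)]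
    rw [zf_neg (m := n + 1) (by omega) (by omega),
      zf_neg (m := n) (by omega) (by omega)]
    have e1 : 2 * k + 2 - (n + 1) = 0 := by omega
    have e2 : 2 * k + 2 - n = 1 := by omega
    have e3 : n + 2 = 2 * k + 3 := by omega
    rw [e1, e2, e3, zf_last, h0, neg_one_mul]
    abel
  by_cases hI : n = 2 * k + 2
  · rw [yf_small (by omega), yf_small (by omega)]
    have e1 : n + 1 = 2 * k + 3 := by omega
    have e2 : n + 2 = 0 + (2 * k + 4) := by omega
    rw [e1, zf_last, e2, yf_period, yf_x (by omega),
      zf_neg (m := n) (by omega) (by omega)]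
    have e3 : 2 * k + 2 - n = 0 := by omega
    rw [e3, h0, zero_mul]; abel
  · -- n = 2k+3
    have hJ : n = 2 * k + 3 := by omega
    have e1 : n + 1 = 0 + (2 * k + 4) := by omega
    have e2 : n + 2 = 1 + (2 * k + 4) := by omega
    rw [e1, e2, yf_period, yf_period, yf_x (n := 0) (by omega),
      yf_x (n := 1) (by omega), yf_small (le_of_eq hJ), hJ, zf_last, h0, one_mul]
    abel

lemma yf_rec (n : ℕ) :
    yf k x (n + 1) * x 1 = yf k x n + yf k x (n + 2) := by
  obtain ⟨q, r, hr, rfl⟩ : ∃ q r, r ≤ 2 * k + 3 ∧ n = r + q * (2 * k + 4) := by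
    refine ⟨n / (2 * k + 4), n % (2 * k + 4), ?_, ?_⟩
    · have := Nat.mod_lt n (show 0 < 2 * k + 4 by omega)
      omega
    · rw [Nat.mod_add_div']
  have e : ∀ a : ℕ, yf k x (r + q * (2 * k + 4) + a) = yf k x (r + a) := by
    intro a
    have h : r + q * (2 * k + 4) + a = (r + a) + q * (2 * k + 4) := by ring
    rw [h, yf_period']
  rw [e 1, e 2]
  have h0' : yf k x (r + q * (2 * k + 4)) = yf k x r := by
    have := e 0
    simpa using this
  rw [h0']
  exact yf_rec_small h0 hmid htop hk r hr

/-- The key multiplication formula for the extended sequence. -/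
lemma yf_mul : ∀ j, j ≤ k → ∀ n : ℕ,
    yf k x (n + j) * x j = ∑ t ∈ Finset.range (j + 1), yf k x (n + 2 * t) := by
  intro j
  induction j using Nat.strong_induction_on with
  | _ j ih =>
    intro hj n
    by_cases hj0 : j = 0
    · subst hj0
      rw [h0]
      simp
    by_cases hj1 : j = 1
    · subst hj1
      have p1 : ∑ t ∈ Finset.range (1 + 1), yf k x (n + 2 * t)
          = (∑ t ∈ Finset.range 1, yf k x (n + 2 * t)) + yf k x (n + 2 * 1) :=
        Finset.sum_range_succ _ _
      rw [p1, Finset.sum_range_one]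
      have h := yf_rec h0 hmid htop hk n
      simpa using h
    obtain ⟨m, rfl⟩ : ∃ m, j = m + 2 := ⟨j - 2, by omega⟩
    have hx2 : x (m + 2) = x (m + 1) * x 1 - x m := by
      have h := hmid (m + 1) (by omega) (by omega)
      have e : m + 1 - 1 = m := by omega
      rw [e, show m + 1 + 1 = m + 2 from rfl] at h
      rw [h]; abel
    have key : yf k x (n + (m + 2)) * x (m + 2)
        = (yf k x ((n + 1) + (m + 1)) * x (m + 1)) * x 1
          - yf k x ((n + 2) + m) * x m := by
      rw [hx2]
      have e1 : (n + 1) + (m + 1) = n + (m + 2) := by omega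
      have e2 : (n + 2) + m = n + (m + 2) := by omega
      rw [e1, e2, mul_sub, ← mul_assoc]
    rw [key, ih (m + 1) (by omega) (by omega) (n + 1), ih m (by omega) (by omega) (n + 2),
      Finset.sum_mul]
    have e3 : ∀ t ∈ Finset.range (m + 2),
        yf k x (n + 1 + 2 * t) * x 1 = yf k x (n + 2 * t) + yf k x (n + 2 * t + 2) := by
      intro t _
      have h := yf_rec h0 hmid htop hk (n + 2 * t)
      have e : n + 2 * t + 1 = n + 1 + 2 * t := by omega
      rw [e] at h
      exact h
    rw [Finset.sum_congr rfl e3, Finset.sum_add_distrib]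
    have e4 : ∑ t ∈ Finset.range (m + 1), yf k x (n + 2 + 2 * t)
        = ∑ t ∈ Finset.range (m + 1), yf k x (n + 2 * t + 2) :=
      Finset.sum_congr rfl fun t _ => by congr 1; omega
    have p1 : ∑ t ∈ Finset.range (m + 2), yf k x (n + 2 * t + 2)
        = (∑ t ∈ Finset.range (m + 1), yf k x (n + 2 * t + 2)) + yf k x (n + 2 * (m + 1) + 2) :=
      Finset.sum_range_succ _ _
    have p2 : ∑ t ∈ Finset.range (m + 2 + 1), yf k x (n + 2 * t)
        = (∑ t ∈ Finset.range (m + 2), yf k x (n + 2 * t)) + yf k x (n + 2 * (m + 2)) :=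
      Finset.sum_range_succ _ _
    rw [e4, p1, p2]
    have e6 : n + 2 * (m + 1) + 2 = n + 2 * (m + 2) := by omega
    rw [e6]
    abel

end Rec

end Stmt6Aux

open Stmt6Aux in
/-- The full `A_{k+1}` fusion rules: if `x₀, …, x_k` satisfy the defining relations,
then `xᵢ·xⱼ` is the sum of the `x` indexed by `|i-j|, |i-j|+2, …` up to `i+j`
(when `i+j ≤ k`) or up to `2k-(i+j)` (when `i+j > k`). -/
theorem stmt6 (k : ℕ) (hk : 1 ≤ k) (R : Type*) [Ring R] (x : ℕ → R)
    (h0 : x 0 = 1)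
    (hmid : ∀ i, 1 ≤ i → i ≤ k - 1 → x i * x 1 = x (i - 1) + x (i + 1))
    (htop : x k * x 1 = x (k - 1)) :
    ∀ i, i ≤ k → ∀ j, j ≤ k →
      (i + j ≤ k →
        x i * x j = ∑ t ∈ Finset.range (min i j + 1), x (max i j - min i j + 2 * t)) ∧
      (k < i + j →
        x i * x j = ∑ t ∈ Finset.range (k - max i j + 1), x (max i j - min i j + 2 * t)) := by
  intro i hi j hj
  -- Key intermediate formula, with `yf` still in place: the contributions below
  -- the lower mirror point have already been cancelled.
  have key : x i * x j = ∑ t ∈ Finset.range (min i j + 1),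
      yf k x ((2 * k + 4) + (max i j - min i j) + 2 * t) := by
    have hxi : x i = yf k x (((2 * k + 4) + i - j) + j) := by
      have e : ((2 * k + 4) + i - j) + j = i + 1 * (2 * k + 4) := by omega
      rw [e, yf_period', yf_x hi]
    rw [hxi, yf_mul h0 hmid htop hk j hj ((2 * k + 4) + i - j)]
    rcases le_or_gt j i with hji | hij
    · -- j ≤ i
      have e1 : j + 1 = min i j + 1 := by omega
      rw [e1]
      refine Finset.sum_congr rfl fun t _ => ?_
      congr 1
      omega
    · -- i < j : split off the first j - i terms, which cancel
      have e1 : j + 1 = (j - i) + (i + 1) := by omega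
      rw [e1, Finset.sum_range_add]
      rw [yf_zsum (j - i) ((2 * k + 4) + i - j) 1 (by omega), zero_add]
      have e2 : i + 1 = min i j + 1 := by omega
      rw [e2]
      refine Finset.sum_congr rfl fun t _ => ?_
      congr 1
      omega
  constructor
  · intro hijk
    rw [key]
    refine Finset.sum_congr rfl fun t ht => ?_
    rw [Finset.mem_range] at ht
    have e : (2 * k + 4) + (max i j - min i j) + 2 * t
        = ((max i j - min i j) + 2 * t) + 1 * (2 * k + 4) := by omega
    rw [e, yf_period', yf_x (by omega)]
  · intro hijk
    rw [key]
    have e1 : min i j + 1 = (k - max i j + 1) + (i + j - k) := by omega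
    rw [e1, Finset.sum_range_add]
    have hz : ∑ t ∈ Finset.range (i + j - k),
        yf k x ((2 * k + 4) + (max i j - min i j) + 2 * ((k - max i j + 1) + t)) = 0 := by
      have e2 : ∀ t ∈ Finset.range (i + j - k),
          yf k x ((2 * k + 4) + (max i j - min i j) + 2 * ((k - max i j + 1) + t))
          = yf k x (((2 * k + 4) + (max i j - min i j) + 2 * (k - max i j + 1)) + 2 * t) :=
        fun t _ => by congr 1; omega
      rw [Finset.sum_congr rfl e2]
      exact yf_zsum _ _ 2 (by omega)
    rw [hz, add_zero]
    refine Finset.sum_congr rfl fun t ht => ?_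
    rw [Finset.mem_range] at ht
    have e : (2 * k + 4) + (max i j - min i j) + 2 * t
        = ((max i j - min i j) + 2 * t) + 1 * (2 * k + 4) := by omega
    rw [e, yf_period', yf_x (by omega)]
end

section
/- Let k ≥ 1, let R be an associative unital ring, and let x₀, x₁, ..., x_k ∈ R satisfy x₀ = 1, x_i·x₁ = x_{i−1} + x_{i+1} for all 1 ≤ i ≤ k−1, and x_k·x₁ = x_{k−1}. Then x_k·x_j = x_{k−j} for every 0 ≤ j ≤ k; in particular x_k·x_k = 1, so tensoring with the object X_k permutes the simple objects by j ↦ k − j. -/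
/-- If `x₀, …, x_k` satisfy the `A_{k+1}` fusion rules, then `x_k · x_j = x_{k-j}`
for all `0 ≤ j ≤ k`; in particular `x_k · x_k = 1`, so tensoring with `X_k`
permutes the simple objects by `j ↦ k - j`. -/
theorem stmt7 (k : ℕ) (hk : 1 ≤ k) (R : Type*) [Ring R] (x : ℕ → R)
    (h0 : x 0 = 1)
    (hmid : ∀ i, 1 ≤ i → i ≤ k - 1 → x i * x 1 = x (i - 1) + x (i + 1))
    (htop : x k * x 1 = x (k - 1)) :
    (∀ j, j ≤ k → x k * x j = x (k - j)) ∧ x k * x k = 1 := by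
  have key : ∀ j, j ≤ k → x k * x j = x (k - j) := by
    intro j
    induction j using Nat.twoStepInduction with
    | zero => intro _; simp [h0]
    | one => intro _; simpa using htop
    | more j ih1 ih2 =>
      intro hj2
      have hj1 : j + 1 ≤ k := by omega
      have hj0 : j ≤ k := by omega
      have e1 := ih1 hj0
      have e2 := ih2 hj1
      have hm := hmid (j + 1) (by omega) (by omega)
      simp only [Nat.add_sub_cancel] at hm
      have hx2 : x (j + 2) = x (j + 1) * x 1 - x j := by
        rw [hm]; abel
      have hm2 := hmid (k - (j + 1)) (by omega) (by omega)
      have ea : k - (j + 1) - 1 = k - (j + 2) := by omega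
      have eb : k - (j + 1) + 1 = k - j := by omega
      rw [ea, eb] at hm2
      calc x k * x (j + 2) = (x k * x (j + 1)) * x 1 - x k * x j := by
            rw [hx2, mul_sub, mul_assoc]
        _ = x (k - (j + 1)) * x 1 - x (k - j) := by rw [e1, e2]
        _ = x (k - (j + 2)) := by rw [hm2]; abel
  exact ⟨key, by simpa [h0] using key k le_rfl⟩
end

section
/- Let k ≥ 1 and let ℓ be an integer with gcd(ℓ, k+2) = 1; set s := i·exp(πiℓ/(2(k+2))) ∈ ℂ and [n] := (s^{2n} − s^{−2n})/(s² − s^{−2}). Let S be the (k+1)×(k+1) complex matrix with rows and columns indexed by a, b ∈ {0, 1, ..., k} and entries S_{a,b} = (−1)^{a+b}·[(a+1)(b+1)]. If k is odd and ℓ is odd, then the rank of S equals (k+1)/2; in all other cases S has full rank k+1, i.e. S is invertible. (Hence the braided category C^br_{k,ℓ}, whose S-matrix this is, is modular exactly when k is even or ℓ is even.) -/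
/-!
Put `q = s²`, so that `S = (q - q⁻¹)⁻¹ • M` with `M a b = (-1)^(a+b) (q^(αβ) - q^(-αβ))`,
`α = a + 1`, `β = b + 1`. Since `q = exp(2πi (ℓ + k + 2) / (2(k + 2)))` and `ℓ` is prime to `k + 2`,
`q` is a primitive root of unity of order `m = 2(k + 2)`, except when `k` and `ℓ` are both odd,
where its order is `m = k + 2`. For a primitive `m`-th root `q` and `m ∈ {2p + 1, 2p + 2}`, the
character sums over a full period give
`∑_{β=1}^{p} (q^(αβ) - q^(-αβ)) (q^(γβ) - q^(-γβ)) = -m δ_{αγ}` for `1 ≤ α, γ ≤ p`,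
so the `p × p` matrix `M` squares to `-m`. In the first case this applies to `S` itself with
`p = k + 1`. In the second case rows `a` and `k - a` of `S` coincide, so the rank is at most
`(k + 1) / 2`, and the top-left block of that size satisfies the orthogonality relation.
-/

open Finset

theorem Finset.sum_range_eq_two_nsmul_of_reflect {M : Type*} [AddCommMonoid M] (f : ℕ → M)
    {m p : ℕ} (hp : 2 * p < m) (h0 : f 0 = 0) (hmid : ∀ j, p < j → j < m - p → f j = 0)
    (hrefl : ∀ j ≤ m, f (m - j) = f j) :
    ∑ j ∈ range m, f j = 2 • ∑ j ∈ range p, f (j + 1) := by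
  obtain ⟨c, rfl⟩ : ∃ c, m = p + 1 + c + p := ⟨m - 2 * p - 1, by omega⟩
  have hmid' : ∑ i ∈ range c, f (p + 1 + i) = 0 :=
    sum_eq_zero fun i hi => hmid _ (by omega) (by simp at hi; omega)
  rw [sum_range_add, sum_range_add, sum_range_succ' f p, h0, add_zero, hmid', add_zero, two_nsmul,
    ← sum_range_reflect (fun j => f (j + 1))]
  refine congrArg _ (sum_congr rfl fun j hj => ?_)
  have hjp := mem_range.1 hj
  rw [← hrefl (p + 1 + c + j) (by omega)]
  congr 1
  omega

variable {K : Type*} [Field K]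

/-- The numerator of the quantum integer `[x] = (ζ^x - ζ^(-x)) / (ζ - ζ⁻¹)`. -/
def qNum (ζ : K) (x : ℤ) : K := ζ ^ x - ζ ^ (-x)

lemma qNum_neg (ζ : K) (x : ℤ) : qNum ζ (-x) = -qNum ζ x := by
  simp only [qNum, neg_neg, neg_sub]

lemma qNum_add_of_zpow_eq_one {ζ : K} (hζ : ζ ≠ 0) {y : ℤ} (hy : ζ ^ y = 1) (x : ℤ) :
    qNum ζ (x + y) = qNum ζ x := by
  simp only [qNum, neg_add, zpow_add₀ hζ, zpow_neg ζ y, hy, inv_one, mul_one]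

lemma qNum_eq_zero_of_sq_eq_one {ζ : K} {x : ℤ} (h : (ζ ^ x) ^ 2 = 1) : qNum ζ x = 0 := by
  rw [qNum, zpow_neg, sub_eq_zero]
  exact eq_inv_of_mul_eq_one_left (by rw [← sq, h])

lemma qNum_mul_qNum {ζ : K} (hζ : ζ ≠ 0) (x y : ℤ) :
    qNum ζ x * qNum ζ y =
      (ζ ^ (x + y) + ζ ^ (-(x + y))) - (ζ ^ (x - y) + ζ ^ (-(x - y))) := by
  simp only [qNum, zpow_add₀ hζ, zpow_sub₀ hζ, zpow_neg]
  field_simp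
  ring

namespace IsPrimitiveRoot

variable {ζ : K} {m : ℕ}

lemma sum_range_zpow_mul (hζ : IsPrimitiveRoot ζ m) (r : ℤ) :
    ∑ j ∈ range m, ζ ^ (r * j) = if (m : ℤ) ∣ r then (m : K) else 0 := by
  have hpow : ∀ j : ℕ, ζ ^ (r * j) = (ζ ^ r) ^ j := fun j => by rw [zpow_mul, zpow_natCast]
  simp only [hpow]
  split_ifs with hr
  · simp [(hζ.zpow_eq_one_iff_dvd r).2 hr]
  · rw [geom_sum_eq ((hζ.zpow_eq_one_iff_dvd r).not.2 hr), ← zpow_natCast, ← zpow_mul,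
      mul_comm, zpow_mul, hζ.zpow_eq_one, one_zpow, sub_self, zero_div]

lemma sum_range_qNum_mul_qNum (hζ : IsPrimitiveRoot ζ m) (hm : m ≠ 0) (α γ : ℤ) :
    ∑ j ∈ range m, qNum ζ (α * j) * qNum ζ (γ * j) =
      2 * ((if (m : ℤ) ∣ α + γ then (m : K) else 0) - if (m : ℤ) ∣ α - γ then (m : K) else 0) := by
  have hexpand : ∀ j : ℕ, qNum ζ (α * j) * qNum ζ (γ * j) =
      (ζ ^ ((α + γ) * j) + ζ ^ (-(α + γ) * j)) - (ζ ^ ((α - γ) * j) + ζ ^ (-(α - γ) * j)) :=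
    fun j => by rw [qNum_mul_qNum (hζ.ne_zero hm)]; ring_nf
  simp only [hexpand, sum_sub_distrib, sum_add_distrib, hζ.sum_range_zpow_mul, dvd_neg]
  ring

lemma sum_qNum_mul_qNum [CharZero K] {p : ℕ} (hζ : IsPrimitiveRoot ζ m)
    (hm : m = 2 * p + 1 ∨ m = 2 * p + 2) {α γ : ℤ} (hα₀ : 0 < α) (hαp : α ≤ p) (hγ₀ : 0 < γ)
    (hγp : γ ≤ p) :
    ∑ j ∈ range p, qNum ζ (α * (j + 1)) * qNum ζ (γ * (j + 1)) = if α = γ then -(m : K) else 0 := by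
  have hζ0 := hζ.ne_zero (by omega)
  -- Both factors change sign under `j ↦ m - j`, and for `m = 2p + 2` the middle term vanishes.
  have hper : ∀ β : ℤ, ζ ^ (β * m) = 1 := fun β => by
    rw [mul_comm, zpow_mul, hζ.zpow_eq_one, one_zpow]
  have hfold := sum_range_eq_two_nsmul_of_reflect (fun j => qNum ζ (α * j) * qNum ζ (γ * j))
    (m := m) (p := p) (by omega) (by simp [qNum])
    (fun j hpj hjm => by
      have hsq : (ζ ^ (α * j)) ^ 2 = 1 := by
        rw [← zpow_natCast, ← zpow_mul, mul_assoc, ← hper α]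
        congr 2
        omega
      simp [qNum_eq_zero_of_sq_eq_one hsq])
    (fun j hj => by
      have hrefl : ∀ β : ℤ, qNum ζ (β * (m - j : ℕ)) = -qNum ζ (β * j) := fun β => by
        rw [Nat.cast_sub hj, mul_sub, sub_eq_neg_add, qNum_add_of_zpow_eq_one hζ0 (hper β),
          qNum_neg]
      simp only [hrefl, neg_mul_neg])
  have hsum : ¬ (m : ℤ) ∣ α + γ := fun h => by
    have := Int.le_of_dvd (by omega) h
    omega
  have hdiff : (m : ℤ) ∣ α - γ ↔ α = γ := by
    refine ⟨fun h => ?_, fun h => by simp [h]⟩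
    have := Int.eq_zero_of_abs_lt_dvd h (by rw [abs_lt]; omega)
    omega
  rw [hζ.sum_range_qNum_mul_qNum (by omega), if_neg hsum, two_nsmul, ← two_mul] at hfold
  simp only [Nat.cast_add, Nat.cast_one] at hfold
  rw [← mul_right_inj' (two_ne_zero' K), ← hfold]
  split_ifs with h <;> simp_all

lemma sub_inv_ne_zero (hζ : IsPrimitiveRoot ζ m) (hm : 2 < m) : ζ - ζ⁻¹ ≠ 0 := by
  intro h
  have hsq : ζ ^ 2 = 1 := by
    rw [sq, ← mul_inv_cancel₀ (hζ.ne_zero (by omega)), ← sub_eq_zero.1 h]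
  have := Nat.le_of_dvd two_pos (hζ.dvd_of_pow_eq_one 2 hsq)
  omega

end IsPrimitiveRoot

/-- For `ζ = s²` this is `(s² - s⁻²)` times the `S`-matrix with rows and columns labelled
`0, …, p - 1`. -/
def qMatrix (ζ : K) (p : ℕ) : Matrix (Fin p) (Fin p) K :=
  Matrix.of fun a b => (-1) ^ ((a : ℕ) + (b : ℕ)) * qNum ζ (((a : ℕ) + 1) * ((b : ℕ) + 1))

lemma qMatrix_submatrix_castLE (ζ : K) {p q : ℕ} (h : p ≤ q) :
    (qMatrix ζ q).submatrix (Fin.castLE h) (Fin.castLE h) = qMatrix ζ p :=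
  rfl

lemma qMatrix_rev {ζ : K} {p : ℕ} (hζ : ζ ^ (p + 1) = 1) (hp : Even p) (a : Fin p) :
    qMatrix ζ p a.rev = qMatrix ζ p a := by
  have hζ0 : ζ ≠ 0 := by rintro rfl; simp at hζ
  have hζ' : ζ ^ ((p + 1 : ℕ) : ℤ) = 1 := by rw [zpow_natCast, hζ]
  ext b
  obtain ⟨t, rfl⟩ := hp
  have hodd : Odd ((a.rev : ℕ) + b + (a + b)) := ⟨t - 1 + b, by rw [Fin.val_rev]; omega⟩
  have hsign : (-1 : K) ^ ((a.rev : ℕ) + b) = -(-1) ^ ((a : ℕ) + b) := by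
    have hprod : (-1 : K) ^ ((a.rev : ℕ) + b) * (-1) ^ ((a : ℕ) + b) = -1 := by
      rw [← pow_add, hodd.neg_one_pow]
    have hsq : (-1 : K) ^ ((a : ℕ) + b) * (-1) ^ ((a : ℕ) + b) = 1 := by
      rw [← pow_add, Even.neg_one_pow ⟨_, rfl⟩]
    linear_combination (-1 : K) ^ ((a : ℕ) + b) * hprod - (-1 : K) ^ ((a.rev : ℕ) + b) * hsq
  have hnum : qNum ζ (((a.rev : ℕ) + 1) * ((b : ℕ) + 1)) =
      -qNum ζ (((a : ℕ) + 1) * ((b : ℕ) + 1)) := by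
    have : (((a.rev : ℕ) : ℤ) + 1) * ((b : ℕ) + 1) =
        -((((a : ℕ) : ℤ) + 1) * ((b : ℕ) + 1)) + ((t + t + 1 : ℕ) : ℤ) * ((b : ℕ) + 1) := by
      rw [Fin.val_rev]; push_cast [Nat.cast_sub (by omega : (a : ℕ) + 1 ≤ t + t)]; ring
    rw [this, qNum_add_of_zpow_eq_one hζ0 (by rw [zpow_mul, hζ', one_zpow]), qNum_neg]
  simp only [qMatrix, Matrix.of_apply, hsign, hnum, neg_mul_neg]

lemma Matrix.rank_le_of_rev_eq {R n : Type*} [CommRing R] [StrongRankCondition R] [Fintype n]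
    {p : ℕ} (A : Matrix (Fin p) n R) (hA : ∀ a, A a.rev = A a) : A.rank ≤ (p + 1) / 2 := by
  let fold : Fin p → Fin ((p + 1) / 2) := fun a =>
    if ha : (a : ℕ) < (p + 1) / 2 then ⟨a, ha⟩ else ⟨a.rev, by rw [Fin.val_rev]; omega⟩
  have hfold : A = (A.submatrix (Fin.castLE (by omega)) id).submatrix fold id := by
    ext a b
    by_cases ha : (a : ℕ) < (p + 1) / 2
    · simp [fold, ha]
    · simp only [fold, ha, dite_false, submatrix_apply, id]
      rw [← hA a]
      rfl
  rw [hfold]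
  exact (rank_submatrix_le _ _ _).trans (rank_le_card_height _ |>.trans (Fintype.card_fin _).le)

namespace IsPrimitiveRoot

variable {ζ : K} {m p : ℕ} [CharZero K]

lemma qMatrix_mul_self (hζ : IsPrimitiveRoot ζ m) (hm : m = 2 * p + 1 ∨ m = 2 * p + 2) :
    qMatrix ζ p * qMatrix ζ p = (-(m : K)) • 1 := by
  ext a c
  have hsign : ∀ b : Fin p,
      (-1 : K) ^ ((a : ℕ) + b) * (-1) ^ ((b : ℕ) + c) = (-1) ^ ((a : ℕ) + c) := fun b => by
    rw [← pow_add, show (a : ℕ) + b + (b + c) = a + c + 2 * b by ring, pow_add, pow_mul,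
      neg_one_sq, one_pow, mul_one]
  have hentry : ∀ b : Fin p, qMatrix ζ p a b * qMatrix ζ p b c = (-1) ^ ((a : ℕ) + c) *
      (qNum ζ ((((a : ℕ) : ℤ) + 1) * ((b : ℕ) + 1)) *
        qNum ζ ((((c : ℕ) : ℤ) + 1) * ((b : ℕ) + 1))) := fun b => by
    simp only [qMatrix, Matrix.of_apply, ← hsign b, mul_comm ((((b : ℕ) : ℤ) + 1))]
    ring
  rw [Matrix.mul_apply, sum_congr rfl fun b _ => hentry b, ← mul_sum,
    Fin.sum_univ_eq_sum_range (fun j => qNum ζ ((((a : ℕ) : ℤ) + 1) * (j + 1)) *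
      qNum ζ ((((c : ℕ) : ℤ) + 1) * (j + 1))),
    hζ.sum_qNum_mul_qNum hm (by omega) (by omega) (by omega) (by omega)]
  by_cases hac : a = c
  · subst hac
    simp [← two_mul, pow_mul]
  · simp [hac, Fin.val_inj]

lemma isUnit_qMatrix (hζ : IsPrimitiveRoot ζ m) (hm : m = 2 * p + 1 ∨ m = 2 * p + 2) :
    IsUnit (qMatrix ζ p) := by
  have hm0 : (m : K) ≠ 0 := by exact_mod_cast (by omega : m ≠ 0)
  rw [Matrix.isUnit_iff_isUnit_det]
  refine Matrix.isUnit_det_of_right_inverse (B := (-(m : K))⁻¹ • qMatrix ζ p) ?_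
  rw [Matrix.mul_smul, hζ.qMatrix_mul_self hm, smul_smul, inv_mul_cancel₀ (neg_ne_zero.2 hm0),
    one_smul]

lemma rank_qMatrix (hζ : IsPrimitiveRoot ζ (p + 1)) (hp : Even p) :
    (qMatrix ζ p).rank = p / 2 := by
  have hp2 : p / 2 ≤ p := Nat.div_le_self p 2
  refine le_antisymm ?_ ?_
  · refine (Matrix.rank_le_of_rev_eq _ (qMatrix_rev hζ.pow_eq_one hp)).trans_eq ?_
    obtain ⟨t, rfl⟩ := hp
    omega
  · calc p / 2 = (qMatrix ζ (p / 2)).rank := by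
          rw [Matrix.rank_of_isUnit _ (hζ.isUnit_qMatrix (by omega)), Fintype.card_fin]
      _ = ((qMatrix ζ p).submatrix (Fin.castLE hp2) (Fin.castLE hp2)).rank := by
          rw [qMatrix_submatrix_castLE]
      _ ≤ (qMatrix ζ p).rank := Matrix.rank_submatrix_le _ _ _

end IsPrimitiveRoot

open Complex Real

lemma Complex.sq_I_mul_exp (ℓ : ℤ) {n : ℕ} (hn : n ≠ 0) :
    (I * exp (π * I * ℓ / (2 * n))) ^ 2 = exp (2 * π * I * ((ℓ + n : ℤ) / (2 * n : ℕ))) := by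
  rw [mul_pow, I_sq, ← exp_nat_mul, ← exp_pi_mul_I, ← exp_add]
  congr 1
  push_cast
  field_simp
  ring

lemma Complex.isPrimitiveRoot_sq_I_mul_exp_of_even {ℓ : ℤ} {n : ℕ} (hn : n ≠ 0)
    (hcop : IsCoprime ℓ n) (heven : Even (ℓ + n)) :
    IsPrimitiveRoot ((I * exp (π * I * ℓ / (2 * n))) ^ 2) n := by
  obtain ⟨t, ht⟩ := heven
  have ht' : IsCoprime t n := by
    have : IsCoprime (ℓ + n) n := by simpa using hcop.add_mul_left_left 1
    rw [ht, ← two_mul] at this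
    exact this.of_mul_left_right
  convert isPrimitiveRoot_exp_of_isCoprime t n hn ht' using 2
  rw [sq_I_mul_exp ℓ hn, ht]
  congr 1
  push_cast
  field_simp
  ring

lemma Complex.isPrimitiveRoot_sq_I_mul_exp_of_odd {ℓ : ℤ} {n : ℕ} (hn : n ≠ 0)
    (hcop : IsCoprime ℓ n) (hodd : Odd (ℓ + n)) :
    IsPrimitiveRoot ((I * exp (π * I * ℓ / (2 * n))) ^ 2) (2 * n) := by
  rw [sq_I_mul_exp ℓ hn]
  refine isPrimitiveRoot_exp_of_isCoprime _ _ (by omega) ?_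
  push_cast
  exact (Int.isCoprime_two_right.2 hodd).mul_right (by simpa using hcop.add_mul_left_left 1)

lemma Int.odd_add_of_isCoprime {a b : ℤ} (h : IsCoprime a b) (hab : ¬(Odd a ∧ Odd b)) :
    Odd (a + b) := by
  rcases Int.even_or_odd a with ha | ha <;> rcases Int.even_or_odd b with hb | hb
  · exact absurd (h.isUnit_of_dvd' ha.two_dvd hb.two_dvd) (by norm_num [Int.isUnit_iff])
  · exact ha.add_odd hb
  · exact ha.add_even hb
  · exact absurd ⟨ha, hb⟩ hab

/-- For `k ≥ 1`, `gcd(ℓ, k+2) = 1`, `s = i·exp(πiℓ/(2(k+2)))`, and `S` the matrix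
with entries `S_{a,b} = (-1)^(a+b)·[(a+1)(b+1)]`, the rank of `S` is `(k+1)/2` when
`k` and `ℓ` are both odd, and otherwise `S` has full rank `k+1`, i.e. is invertible.
Hence `C^br_{k,ℓ}` is modular exactly when `k` is even or `ℓ` is even. -/
theorem stmt9 (k : ℕ) (hk : 1 ≤ k) (ℓ : ℤ) (hl : Int.gcd ℓ ((k : ℤ) + 2) = 1)
    (s : ℂ)
    (hs : s = Complex.I * Complex.exp ((Real.pi : ℂ) * Complex.I * (ℓ : ℂ) / (2 * ((k : ℂ) + 2))))
    (S : Matrix (Fin (k + 1)) (Fin (k + 1)) ℂ)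
    (hS : ∀ a b : Fin (k + 1), S a b =
      (-1) ^ ((a : ℕ) + (b : ℕ)) *
        ((s ^ (2 * (((a : ℕ) + 1) * ((b : ℕ) + 1) : ℤ)) -
            s ^ (-(2 * (((a : ℕ) + 1) * ((b : ℕ) + 1) : ℤ)))) /
          (s ^ (2 : ℤ) - s ^ (-2 : ℤ)))) :
    (Odd k ∧ Odd ℓ → S.rank = (k + 1) / 2) ∧
      (¬ (Odd k ∧ Odd ℓ) → S.rank = k + 1 ∧ IsUnit S) := by
  have hn : k + 2 ≠ 0 := by omega
  have hcop : IsCoprime ℓ ((k + 2 : ℕ) : ℤ) := by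
    rw [Int.isCoprime_iff_gcd_eq_one]
    exact_mod_cast hl
  have hs' : s = I * exp (π * I * ℓ / (2 * ((k + 2 : ℕ) : ℂ))) := by
    rw [hs]
    push_cast
    ring
  have hpow : ∀ x : ℤ, s ^ (2 * x) = (s ^ 2) ^ x := fun x => by rw [zpow_mul]; norm_cast
  have hS' : S = (s ^ 2 - (s ^ 2)⁻¹)⁻¹ • qMatrix (s ^ 2) (k + 1) := by
    ext a b
    rw [hS, show (-2 : ℤ) = 2 * (-1) by rfl, ← mul_neg, hpow, hpow, hpow, zpow_ofNat, zpow_neg_one]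
    simp only [Matrix.smul_apply, smul_eq_mul, qMatrix, Matrix.of_apply, qNum]
    ring
  refine ⟨fun hodd => ?_, fun hodd => ?_⟩
  · have hζ : IsPrimitiveRoot (s ^ 2) (k + 1 + 1) := by
      rw [hs']
      refine isPrimitiveRoot_sq_I_mul_exp_of_even hn hcop ?_
      exact hodd.2.add_odd (by exact_mod_cast hodd.1.add_even even_two)
    rw [hS', Matrix.rank_smul_of_mem_nonZeroDivisors _ (mem_nonZeroDivisors_of_ne_zero
      (inv_ne_zero (hζ.sub_inv_ne_zero (by omega)))),
      hζ.rank_qMatrix (by simp [hodd.1, parity_simps])]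
  · have hζ : IsPrimitiveRoot (s ^ 2) (2 * (k + 2)) := by
      rw [hs']
      refine isPrimitiveRoot_sq_I_mul_exp_of_odd hn hcop (Int.odd_add_of_isCoprime hcop ?_)
      simpa [parity_simps, and_comm] using hodd
    have hunit : IsUnit S := by
      rw [hS', Matrix.isUnit_iff_isUnit_det, Matrix.det_smul]
      exact ((hζ.sub_inv_ne_zero (by omega)).isUnit.inv.pow _).mul
        ((Matrix.isUnit_iff_isUnit_det _).1 (hζ.isUnit_qMatrix (by omega)))
    exact ⟨by rw [Matrix.rank_of_isUnit S hunit, Fintype.card_fin], hunit⟩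
end

section
/- Let k ≥ 2 and let ℓ be an integer with gcd(ℓ, k+2) = 1; set s := i·exp(πiℓ/(2(k+2))) ∈ ℂ and t_a := (−1)^a·s^{a(a+2)} for a = 0, 1, ..., k. Then the conductor of C^br_{k,ℓ}, i.e. the least positive integer N such that t_a^N = 1 for all a ∈ {0,...,k}, equals: k+2 if k+ℓ ≡ 0 (mod 4); 2(k+2) if k+ℓ ≡ 2 (mod 4); and 4(k+2) if k+ℓ is odd. In particular, when k is even the conductor is always 4(k+2). -/
/-!
With `m = k + 2` and `ζ = exp(2πi/(4m))`, a primitive `4m`-th root of unity, we have `i = ζ^m`,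
`-1 = ζ^(2m)` and `s = ζ^(m+ℓ)`, so `t_a = ζ^(2ma + u·a(a+2))` with `u = m + ℓ` coprime to `m`.
Hence `t_a^N = 1` for all `a ≤ k` iff `4m ∣ N·(2ma + u·a(a+2))` for all `a ≤ k`. The cases
`a = 1, 2` already force `m ∣ N` (and, by parity, `2m ∣ N` if `4 ∣ u` and `4m ∣ N` if `u` is odd),
while conversely these multiples work for every `a`; for `u ≡ 2 (mod 4)` this is because `m` is then
odd, so that `2ma + u·a(a+2) ≡ 2a + 2a ≡ 0 (mod 4)`.
-/

open Complex Real

def twistExponent (m u a : ℤ) : ℤ := 2 * m * a + u * a * (a + 2)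

section Twist

variable (m : ℕ) (ℓ : ℤ)

theorem twist_eq_zpow (hm : m ≠ 0) (a : ℕ) :
    (-1) ^ a * (I * exp (π * I * ℓ / (2 * m))) ^ (a * (a + 2)) =
      exp (2 * π * I / (4 * m : ℕ)) ^ twistExponent m (m + ℓ) a := by
  set ζ := exp (2 * π * I / (4 * m : ℕ))
  have hm' : (m : ℂ) ≠ 0 := Nat.cast_ne_zero.mpr hm
  have hζ0 : ζ ≠ 0 := exp_ne_zero _
  have hζI : ζ ^ (m : ℤ) = I := by
    rw [zpow_natCast, ← Complex.exp_nat_mul]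
    convert exp_pi_div_two_mul_I using 2
    push_cast; field_simp; ring
  have hζneg : ζ ^ (2 * m : ℤ) = -1 := by
    rw [mul_comm, zpow_mul, hζI, zpow_two, I_mul_I]
  have hζℓ : ζ ^ ℓ = exp (π * I * ℓ / (2 * m)) := by
    rw [← exp_int_mul]
    congr 1; push_cast; field_simp; ring
  rw [← hζℓ, ← hζI, ← hζneg, ← zpow_add₀ hζ0, ← zpow_natCast, ← zpow_natCast, ← zpow_mul,
    ← zpow_mul, ← zpow_add₀ hζ0, twistExponent]
  congr 1; push_cast; ring

theorem twist_pow_eq_one_iff (hm : m ≠ 0) (a N : ℕ) :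
    ((-1) ^ a * (I * exp (π * I * ℓ / (2 * m))) ^ (a * (a + 2))) ^ N = 1 ↔
      (4 * m : ℤ) ∣ N * twistExponent m (m + ℓ) a := by
  rw [twist_eq_zpow m ℓ hm, ← zpow_natCast, ← zpow_mul,
    (isPrimitiveRoot_exp _ (by positivity)).zpow_eq_one_iff_dvd, mul_comm]
  push_cast; ring_nf

end Twist

/-- The conductor, in terms of `m = k + 2` and `u = m + ℓ`. -/
def twistConductor (m : ℕ) (u : ℤ) : ℕ :=
  if u % 4 = 2 then m else if u % 4 = 0 then 2 * m else 4 * m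

theorem twistConductor_pos {m : ℕ} (hm : 0 < m) (u : ℤ) : 0 < twistConductor m u := by
  unfold twistConductor; split_ifs <;> omega

section Arithmetic

variable {m u : ℤ}

theorem odd_of_isCoprime_of_even (hcop : IsCoprime u m) (hu : Even u) : Odd m := by
  obtain ⟨w, rfl⟩ := hu
  rw [← two_mul] at hcop
  exact Int.isCoprime_two_left.mp hcop.of_mul_left_left

theorem four_dvd_twistExponent (hm : Odd m) (hu : u % 4 = 2) (a : ℤ) :
    4 ∣ twistExponent m u a := by
  unfold twistExponent
  obtain ⟨p, rfl⟩ := hm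
  obtain ⟨w, rfl⟩ : ∃ w, u = 4 * w + 2 := ⟨u / 4, by omega⟩
  obtain ⟨b, rfl | rfl⟩ := Int.even_or_odd' a
  · exact ⟨(2 * p + 1) * b + (4 * w + 2) * b * (b + 1), by ring⟩
  · exact ⟨(2 * b + 1) * (p + w * (2 * b + 3) + b + 2), by ring⟩

theorem dvd_mul_twistExponent_of_conductor_dvd {m : ℕ} (hcop : IsCoprime u m) {N : ℤ}
    (hN : (twistConductor m u : ℤ) ∣ N) (a : ℤ) : 4 * (m : ℤ) ∣ N * twistExponent m u a := by
  obtain ⟨q, rfl⟩ := hN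
  unfold twistConductor
  split_ifs with h2 h0
  · have hm := odd_of_isCoprime_of_even hcop (Int.even_iff.mpr (by omega))
    obtain ⟨r, hr⟩ := four_dvd_twistExponent hm h2 a
    exact ⟨q * r, by rw [mul_assoc, hr]; ring⟩
  · obtain ⟨w, rfl⟩ : ∃ w, u = 4 * w := ⟨u / 4, by omega⟩
    exact ⟨q * (m * a + 2 * w * a * (a + 2)), by unfold twistExponent; push_cast; ring⟩
  · exact ⟨q * twistExponent m u a, by push_cast; ring⟩

theorem conductor_dvd_of_dvd_mul_twistExponent {m : ℕ} (hm : m ≠ 0) (hcop : IsCoprime u m) {N : ℤ}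
    (h1 : 4 * (m : ℤ) ∣ N * (2 * m + 3 * u)) (h2 : 4 * (m : ℤ) ∣ N * (4 * m + 8 * u)) :
    (twistConductor m u : ℤ) ∣ N := by
  -- the twist exponents for `a = 2` and `a = 1` differ by `2u` up to a multiple of `4m`
  have h2m : 2 * (m : ℤ) ∣ N * u := by
    have h := dvd_sub h2 (dvd_mul_of_dvd_left h1 2)
    rw [show N * (4 * m + 8 * u) - N * (2 * m + 3 * u) * 2 = 2 * (N * u) by ring,
      show (4 * m : ℤ) = 2 * (2 * m) by ring] at h
    exact (mul_dvd_mul_iff_left two_ne_zero).mp h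
  have hmN : (m : ℤ) ∣ N := hcop.symm.dvd_of_dvd_mul_right (dvd_of_mul_left_dvd h2m)
  unfold twistConductor
  split_ifs with hu2 hu0
  · exact hmN
  · obtain ⟨w, rfl⟩ : ∃ w, u = 4 * w := ⟨u / 4, by omega⟩
    have hmodd := Int.odd_iff.mp (odd_of_isCoprime_of_even hcop ⟨2 * w, by ring⟩)
    have h4 : 2 * 2 ∣ 2 * (N * (m + 6 * w)) :=
      (dvd_mul_right 4 (m : ℤ)).trans (h1.trans (dvd_of_eq (by ring)))
    have hN : 2 ∣ N := ((Int.prime_two.dvd_or_dvd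
      ((mul_dvd_mul_iff_left two_ne_zero).mp h4)).resolve_right (by omega))
    push_cast
    exact (Int.isCoprime_two_left.mpr (Int.odd_iff.mpr hmodd)).mul_dvd hN hmN
  · have hu : u % 2 = 1 := by omega
    obtain ⟨q, rfl⟩ : 2 * (m : ℤ) ∣ N :=
      ((Int.isCoprime_two_left.mpr (Int.odd_iff.mpr hu)).mul_left hcop.symm).dvd_of_dvd_mul_right
        h2m
    have hq : 2 ∣ q * (2 * m + 3 * u) := by
      rw [show 4 * (m : ℤ) = 2 * m * 2 by ring, mul_assoc (2 * (m : ℤ)) q] at h1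
      exact (mul_dvd_mul_iff_left (by omega)).mp h1
    obtain ⟨r, rfl⟩ := (Int.prime_two.dvd_or_dvd hq).resolve_right (by omega)
    exact ⟨r, by push_cast; ring⟩

theorem forall_dvd_mul_twistExponent_iff {k m : ℕ} (hk : 2 ≤ k) (hm : m ≠ 0) (hcop : IsCoprime u m)
    (N : ℤ) : (∀ a : ℕ, a ≤ k → 4 * (m : ℤ) ∣ N * twistExponent m u a) ↔
      (twistConductor m u : ℤ) ∣ N := by
  refine ⟨fun h => conductor_dvd_of_dvd_mul_twistExponent hm hcop ?_ ?_, fun h a _ => ?_⟩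
  · convert h 1 (by omega) using 2; simp only [twistExponent]; push_cast; ring
  · convert h 2 hk using 2; simp only [twistExponent]; push_cast; ring
  · exact_mod_cast dvd_mul_twistExponent_of_conductor_dvd hcop h a

end Arithmetic

theorem isLeast_of_forall_iff_dvd {P : ℕ → Prop} {c : ℕ} (hc : 0 < c) (h : ∀ N, P N ↔ c ∣ N) :
    IsLeast {N | 0 < N ∧ P N} c :=
  ⟨⟨hc, (h c).2 dvd_rfl⟩, fun _ ⟨hN, hP⟩ => Nat.le_of_dvd hN ((h _).1 hP)⟩

/-- For `k ≥ 2`, `gcd(ℓ, k+2) = 1`, `s = i·exp(πiℓ/(2(k+2)))`, and quantum twists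
`t_a = (-1)^a·s^(a(a+2))`, the conductor of `C^br_{k,ℓ}` — the least positive `N`
with `t_a^N = 1` for all `0 ≤ a ≤ k` — equals `k+2` if `k+ℓ ≡ 0 (mod 4)`,
`2(k+2)` if `k+ℓ ≡ 2 (mod 4)`, and `4(k+2)` if `k+ℓ` is odd. In particular when
`k` is even the conductor is always `4(k+2)`. -/
theorem stmt10 (k : ℕ) (hk : 2 ≤ k) (ℓ : ℤ) (hl : Int.gcd ℓ ((k : ℤ) + 2) = 1)
    (s : ℂ)
    (hs : s = Complex.I * Complex.exp ((Real.pi : ℂ) * Complex.I * (ℓ : ℂ) / (2 * ((k : ℂ) + 2)))) :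
    IsLeast {N : ℕ | 0 < N ∧ ∀ a : ℕ, a ≤ k → ((-1) ^ a * s ^ (a * (a + 2))) ^ N = 1}
      (if ((k : ℤ) + ℓ) % 4 = 0 then k + 2
        else if ((k : ℤ) + ℓ) % 4 = 2 then 2 * (k + 2)
        else 4 * (k + 2)) ∧
      (Even k →
        IsLeast {N : ℕ | 0 < N ∧ ∀ a : ℕ, a ≤ k → ((-1) ^ a * s ^ (a * (a + 2))) ^ N = 1}
          (4 * (k + 2))) := by
  have hcopℓ : IsCoprime ℓ ((k : ℤ) + 2) := Int.isCoprime_iff_gcd_eq_one.mpr hl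
  have hcop : IsCoprime (((k + 2 : ℕ) : ℤ) + ℓ) ((k + 2 : ℕ) : ℤ) := by
    have := hcopℓ.add_mul_right_left 1
    rw [one_mul, add_comm] at this
    exact_mod_cast this
  have hsets : ∀ N : ℕ, (∀ a : ℕ, a ≤ k → ((-1) ^ a * s ^ (a * (a + 2))) ^ N = 1) ↔
      twistConductor (k + 2) ((k + 2 : ℕ) + ℓ) ∣ N := by
    intro N
    rw [hs, show (k : ℂ) + 2 = (k + 2 : ℕ) by push_cast; rfl, ← Int.natCast_dvd_natCast,
      ← forall_dvd_mul_twistExponent_iff hk (by omega) hcop]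
    simp only [twist_pow_eq_one_iff (k + 2) ℓ (by omega)]
  have hleast := isLeast_of_forall_iff_dvd (twistConductor_pos (m := k + 2) (by omega) _) hsets
  have hvalue : (if ((k : ℤ) + ℓ) % 4 = 0 then k + 2 else if ((k : ℤ) + ℓ) % 4 = 2 then 2 * (k + 2)
      else 4 * (k + 2)) = twistConductor (k + 2) ((k + 2 : ℕ) + ℓ) := by
    unfold twistConductor; push_cast; split_ifs <;> omega
  refine ⟨hvalue ▸ hleast, fun hke => ?_⟩
  have hℓ : ℓ % 2 = 1 :=
    Int.odd_iff.mp (odd_of_isCoprime_of_even hcopℓ.symm (by exact_mod_cast hke.add even_two))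
  have hodd : twistConductor (k + 2) ((k + 2 : ℕ) + ℓ) = 4 * (k + 2) := by
    have := Nat.even_iff.mp hke
    unfold twistConductor; push_cast; split_ifs <;> omega
  exact hodd ▸ hleast
end

section
/- Let k ≥ 1 and let ℓ be an integer with gcd(ℓ, k+2) = 1; set s := i·exp(πiℓ/(2(k+2))) ∈ ℂ. Then the quantum twist of the nontrivial invertible object X_k, namely θ := (−1)^k·s^{k(k+2)}, satisfies θ = (−1)^k·i^{k(k+ℓ+2)}, and explicitly: θ = 1 if k ≡ 0 (mod 4), or k ≡ 1 and ℓ ≡ 3 (mod 4), or k ≡ 3 and ℓ ≡ 1 (mod 4); θ = −1 if k ≡ 2 (mod 4), or k ≡ 1 and ℓ ≡ 1 (mod 4), or k ≡ 3 and ℓ ≡ 3 (mod 4); θ = i if k is odd and ℓ ≡ 0 (mod 4); and θ = −i if k is odd and ℓ ≡ 2 (mod 4). (Since the braided categories with A₂ fusion rules, Rep(ℤ/2ℤ), sVec, Sem and its conjugate, are distinguished by the twists 1, −1, i, −i of their nontrivial objects, this identifies the maximal pointed subcategory of C^br_{k,ℓ}: in particular it is Rep(ℤ/2ℤ) whenever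 k ≡ 0 (mod 4) and sVec whenever k ≡ 2 (mod 4).) -/
/-!
Since `k + 2` divides the exponent `k (k + 2)`, the root of unity `exp (π i ℓ / (2 (k + 2)))`
raised to it becomes `i ^ (k ℓ)`, so `θ = (-1) ^ k i ^ (k (k + ℓ + 2)) = i ^ (k (k + ℓ + 4))`.
This depends only on `k` and `ℓ` modulo `4`, and when `k ≡ 2 (mod 4)` the coprimality of `ℓ`
and `k + 2` forces `ℓ` to be odd.
-/

open Complex Real

lemma Complex.I_zpow_emod_four (n : ℤ) : I ^ (n % 4) = I ^ n := by
  conv_rhs => rw [← Int.emod_add_mul_ediv n 4]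
  rw [zpow_add₀ I_ne_zero, zpow_mul, zpow_ofNat, I_pow_four, one_zpow, mul_one]

lemma Complex.neg_one_pow_mul_I_zpow (k : ℕ) (n : ℤ) : (-1) ^ k * I ^ n = I ^ (n + 2 * k) := by
  rw [zpow_add₀ I_ne_zero, zpow_mul, zpow_ofNat, I_sq, zpow_natCast, mul_comm]

lemma exp_pi_mul_I_div_pow_mul_eq_I_zpow (k m : ℕ) (ℓ : ℤ) :
    exp (π * I * ℓ / (2 * (k + 2))) ^ (m * (k + 2)) = I ^ ((m : ℤ) * ℓ) := by
  have hk : (k : ℂ) + 2 ≠ 0 := by exact_mod_cast (by omega : k + 2 ≠ 0)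
  have hexp : ((m * (k + 2) : ℕ) : ℂ) * (π * I * ℓ / (2 * (k + 2)))
      = ((m * ℓ : ℤ) : ℂ) * (π / 2 * I) := by
    field_simp
    push_cast
    ring
  rw [← Complex.exp_nat_mul, hexp, exp_int_mul, exp_pi_div_two_mul_I]

lemma neg_one_pow_mul_twist_eq (k : ℕ) (ℓ : ℤ) :
    (-1) ^ k * (I * exp (π * I * ℓ / (2 * (k + 2)))) ^ (k * (k + 2))
      = (-1) ^ k * I ^ ((k : ℤ) * (k + ℓ + 2)) := by
  rw [mul_pow, exp_pi_mul_I_div_pow_mul_eq_I_zpow, ← zpow_natCast I, ← zpow_add₀ I_ne_zero]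
  push_cast
  ring_nf

lemma Int.mul_add_two_add_two_mul_emod_four (a b : ℤ) :
    (a * (a + b + 2) + 2 * a) % 4 = a % 4 * (a % 4 + b % 4) % 4 := by
  rw [show a * (a + b + 2) + 2 * a = a * (a + b) + 4 * a by ring, Int.add_mul_emod_self_left]
  exact ((Int.mod_modEq a 4).mul ((Int.mod_modEq a 4).add (Int.mod_modEq b 4))).symm

lemma Int.emod_two_eq_one_of_gcd_eq_one {a b : ℤ} (h : Int.gcd a b = 1) (hb : 2 ∣ b) :
    a % 2 = 1 := by
  refine Int.emod_two_ne_zero.mp fun ha => ?_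
  have h2 : (2 : ℤ) ∣ Int.gcd a b := Int.dvd_coe_gcd (Int.dvd_of_emod_eq_zero ha) hb
  rw [h] at h2
  norm_num at h2

theorem stmt12_general (k : ℕ) (ℓ : ℤ) (hl : Int.gcd ℓ ((k : ℤ) + 2) = 1)
    (s : ℂ)
    (hs : s = Complex.I * Complex.exp ((Real.pi : ℂ) * Complex.I * (ℓ : ℂ) / (2 * ((k : ℂ) + 2))))
    (θ : ℂ) (hθ : θ = (-1) ^ k * s ^ (k * (k + 2))) :
    θ = (-1) ^ k * Complex.I ^ ((k : ℤ) * ((k : ℤ) + ℓ + 2)) ∧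
      (k % 4 = 0 → θ = 1) ∧
      (k % 4 = 1 ∧ ℓ % 4 = 3 → θ = 1) ∧
      (k % 4 = 3 ∧ ℓ % 4 = 1 → θ = 1) ∧
      (k % 4 = 2 → θ = -1) ∧
      (k % 4 = 1 ∧ ℓ % 4 = 1 → θ = -1) ∧
      (k % 4 = 3 ∧ ℓ % 4 = 3 → θ = -1) ∧
      (Odd k ∧ ℓ % 4 = 0 → θ = Complex.I) ∧
      (Odd k ∧ ℓ % 4 = 2 → θ = -Complex.I) := by
  have hθI : θ = (-1) ^ k * I ^ ((k : ℤ) * (k + ℓ + 2)) := by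
    rw [hθ, hs, neg_one_pow_mul_twist_eq]
  have hθ_emod : θ = I ^ ((k : ℤ) % 4 * ((k : ℤ) % 4 + ℓ % 4) % 4) := by
    rw [hθI, neg_one_pow_mul_I_zpow, ← I_zpow_emod_four, Int.mul_add_two_add_two_mul_emod_four]
  have hℓ : k % 4 = 2 → ℓ % 2 = 1 := fun hk =>
    Int.emod_two_eq_one_of_gcd_eq_one hl (by omega)
  refine ⟨hθI, ?_⟩
  simp only [Nat.odd_iff]
  subst hθ_emod
  obtain hk4 | hk4 | hk4 | hk4 :
      (k : ℤ) % 4 = 0 ∨ (k : ℤ) % 4 = 1 ∨ (k : ℤ) % 4 = 2 ∨ (k : ℤ) % 4 = 3 := by omega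
  all_goals obtain hℓ4 | hℓ4 | hℓ4 | hℓ4 : ℓ % 4 = 0 ∨ ℓ % 4 = 1 ∨ ℓ % 4 = 2 ∨ ℓ % 4 = 3 := by omega
  all_goals rw [hk4, hℓ4]; norm_num; omega

/-- For `k ≥ 1`, `gcd(ℓ, k+2) = 1`, `s = i·exp(πiℓ/(2(k+2)))`, the quantum twist
`θ = (-1)^k·s^(k(k+2))` of the nontrivial invertible object `X_k` of `C^br_{k,ℓ}`
equals `(-1)^k·i^(k(k+ℓ+2))`, and explicitly is `1`, `-1`, `i`, or `-i` according
to the stated congruence conditions on `k` and `ℓ` mod 4; this identifies the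
maximal pointed subcategory of `C^br_{k,ℓ}` as `Rep(ℤ/2ℤ)`, `sVec`, `Sem`, or the
conjugate of `Sem` respectively. -/
theorem stmt12 (k : ℕ) (hk : 1 ≤ k) (ℓ : ℤ) (hl : Int.gcd ℓ ((k : ℤ) + 2) = 1)
    (s : ℂ)
    (hs : s = Complex.I * Complex.exp ((Real.pi : ℂ) * Complex.I * (ℓ : ℂ) / (2 * ((k : ℂ) + 2))))
    (θ : ℂ) (hθ : θ = (-1) ^ k * s ^ (k * (k + 2))) :
    θ = (-1) ^ k * Complex.I ^ ((k : ℤ) * ((k : ℤ) + ℓ + 2)) ∧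
      (k % 4 = 0 → θ = 1) ∧
      (k % 4 = 1 ∧ ℓ % 4 = 3 → θ = 1) ∧
      (k % 4 = 3 ∧ ℓ % 4 = 1 → θ = 1) ∧
      (k % 4 = 2 → θ = -1) ∧
      (k % 4 = 1 ∧ ℓ % 4 = 1 → θ = -1) ∧
      (k % 4 = 3 ∧ ℓ % 4 = 3 → θ = -1) ∧
      (Odd k ∧ ℓ % 4 = 0 → θ = Complex.I) ∧
      (Odd k ∧ ℓ % 4 = 2 → θ = -Complex.I) :=
  stmt12_general k ℓ hl s hs θ hθ
end
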